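/- Let ω and C be reals and i ≥ 1 an integer. Then f_0(C) = ω·C/3, and, provided C ≠ 3, the denominator in the definition of f_i(C) is nonzero, the denominator in the definition of f_{i−1}(2C/(3−C)) is nonzero, f_{i−1}(2C/(3−C)) ≠ 0, and f_{i−1}(2C/(3−C)) + (ω−1) ≠ 0, one has f_i(C) = ω / (1 + (ω−1)/f_{i−1}(2C/(3−C))). -/

import Mathlib

/-!
Write `f_i = N_i / D_i` with `N_i(C) = 2^i ω^{i+1} C`, and put `C' = 2C/(3-C)`. Clearing the
denominator `3 - C` shows `N_{i+1}(C) = (3-C) ω N_i(C')` and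
`D_{i+1}(C) = (3-C) (N_i(C') + (ω-1) D_i(C'))`, so `f_{i+1}(C) = ω N / (N + (ω-1) D)` with
`N, D` evaluated at `C'`, which is `ω / (1 + (ω-1)/f_i(C'))` once `N ≠ 0`.
-/

/-- The denominator in the definition of `f_i(C)`. -/
noncomputable def fDen (ω : ℝ) (i : ℕ) (C : ℝ) : ℝ :=
  3 ^ (i + 1) * (ω - 1) ^ i
    + (3 * ((2 : ℝ) ^ i - 3 ^ i) * (ω - 1) ^ i - 2 ^ i * (ω - 1) ^ i * ω
        + 2 ^ i * ω ^ (i + 1)) * C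

/-- `f_i(C) = 2^i ω^{i+1} C / (3^{i+1}(ω-1)^i + (3(2^i-3^i)(ω-1)^i - 2^i(ω-1)^i ω + 2^i ω^{i+1}) C)`. -/
noncomputable def fSeq (ω : ℝ) (i : ℕ) (C : ℝ) : ℝ :=
  2 ^ i * ω ^ (i + 1) * C / fDen ω i C

theorem div_one_add_div_div {K : Type*} [Field K] (a b n d : K) (hn : n ≠ 0) :
    a / (1 + b / (n / d)) = a * n / (n + b * d) := by
  rw [div_div_eq_mul_div, one_add_div hn, div_div_eq_mul_div]

noncomputable def fNum (ω : ℝ) (i : ℕ) (C : ℝ) : ℝ :=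
  2 ^ i * ω ^ (i + 1) * C

theorem fSeq_eq_fNum_div_fDen (ω : ℝ) (i : ℕ) (C : ℝ) : fSeq ω i C = fNum ω i C / fDen ω i C :=
  rfl

theorem fSeq_zero_left (ω C : ℝ) : fSeq ω 0 C = ω * C / 3 := by
  simp [fSeq, fDen]

theorem fSeq_zero_right (ω : ℝ) (i : ℕ) : fSeq ω i 0 = 0 := by
  simp [fSeq]

section Step

variable {ω C : ℝ} (j : ℕ)

theorem fNum_succ (hC : C ≠ 3) :
    fNum ω (j + 1) C = (3 - C) * (ω * fNum ω j (2 * C / (3 - C))) := by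
  have : (3 : ℝ) - C ≠ 0 := sub_ne_zero.mpr hC.symm
  simp only [fNum]
  field_simp
  ring

theorem fDen_succ (hC : C ≠ 3) :
    fDen ω (j + 1) C =
      (3 - C) * (fNum ω j (2 * C / (3 - C)) + (ω - 1) * fDen ω j (2 * C / (3 - C))) := by
  have : (3 : ℝ) - C ≠ 0 := sub_ne_zero.mpr hC.symm
  simp only [fNum, fDen]
  field_simp
  ring

theorem fSeq_succ (hf : fSeq ω j (2 * C / (3 - C)) ≠ 0) :
    fSeq ω (j + 1) C = ω / (1 + (ω - 1) / fSeq ω j (2 * C / (3 - C))) := by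
  have hC : C ≠ 3 := by
    rintro rfl
    simp [fSeq_zero_right] at hf
  have hN : fNum ω j (2 * C / (3 - C)) ≠ 0 := (div_ne_zero_iff.mp hf).1
  rw [fSeq_eq_fNum_div_fDen, fSeq_eq_fNum_div_fDen, div_one_add_div_div _ _ _ _ hN,
    fNum_succ j hC, fDen_succ j hC, mul_div_mul_left _ _ (sub_ne_zero.mpr hC.symm)]

end Step

/-- `f_0(C) = ωC/3`, and for `i ≥ 1`, provided `C ≠ 3`, the relevant denominators are
nonzero, `f_{i-1}(2C/(3-C)) ≠ 0` and `f_{i-1}(2C/(3-C)) + (ω-1) ≠ 0`, one has the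
recurrence `f_i(C) = ω / (1 + (ω-1)/f_{i-1}(2C/(3-C)))`. -/
theorem fSeq_recurrence (ω C : ℝ) (i : ℕ) (hi : 1 ≤ i) :
    fSeq ω 0 C = ω * C / 3 ∧
    (C ≠ 3 → fDen ω i C ≠ 0 → fDen ω (i - 1) (2 * C / (3 - C)) ≠ 0 →
      fSeq ω (i - 1) (2 * C / (3 - C)) ≠ 0 →
      fSeq ω (i - 1) (2 * C / (3 - C)) + (ω - 1) ≠ 0 →
      fSeq ω i C = ω / (1 + (ω - 1) / fSeq ω (i - 1) (2 * C / (3 - C)))) := by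
  refine ⟨fSeq_zero_left ω C, fun _ _ _ hf _ => ?_⟩
  obtain ⟨j, rfl⟩ := Nat.exists_eq_add_of_le' hi
  exact fSeq_succ j hf
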